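/- Let H₁, H₂ be separable complex Hilbert spaces, H = H₁ ⊗ H₂, and (X, μ) = (X₁ × X₂, μ₁ ⊗ μ₂) the product of measure spaces with σ-finite positive measures. If F₁ is a continuous frame for H₁ with respect to (X₁, μ₁) with frame bounds A₁, B₁, and F₂ is a continuous frame for H₂ with respect to (X₂, μ₂) with frame bounds A₂, B₂, then F = F₁ ⊗ F₂ is a continuous frame for H with respect to (X, μ) with frame bounds A = A₁A₂ and B = B₁B₂. -/

import Mathlib

/-! For `f ∈ H` and `a ∈ H₁` let `contractLeft f a ∈ H₂` represent `b ↦ ⟨f, a ⊗ b⟩`. By Tonelli,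
the frame integral of `F₁ ⊗ F₂` at `f` is `∫ (∫ |⟨contractLeft f (F₁ x₁), F₂ x₂⟩|² dμ₂) dμ₁`, which the
frame bounds of `F₂` compare with `∫ ‖contractLeft f (F₁ x₁)‖² dμ₁`. Expanding this norm in a countable
Hilbert basis `(e j)` of `H₂` turns it into `∑ⱼ ∫ |⟨contractRight f (e j), F₁ x₁⟩|² dμ₁`, where
`contractRight f b ∈ H₁` represents `a ↦ ⟨f, a ⊗ b⟩`; the frame bounds of `F₁` compare this with
`∑ⱼ ‖contractRight f (e j)‖² = ‖f‖²`, Parseval's identity for the Hilbert basis `(u i ⊗ e j)` of `H`.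
Expanding `F₂ x₂` in the same basis `(e j)` gives the weak measurability of `F₁ ⊗ F₂`. -/

open MeasureTheory ENNReal

noncomputable section

namespace ContFrame

variable {X : Type*} {H : Type*}

/-- The paper's inner product `⟨f, g⟩`: linear in the first argument and
conjugate-linear in the second (Mathlib's `inner` is conjugate-linear in the first). -/
def pinner [NormedAddCommGroup H] [InnerProductSpace ℂ H] (f g : H) : ℂ :=
  @inner ℂ _ _ g f

/-- `∫_X |⟨f, F x⟩|² dμ(x)`, as a lower integral. -/
def frameInt [MeasurableSpace X] [NormedAddCommGroup H] [InnerProductSpace ℂ H]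
    (μ : Measure X) (F : X → H) (f : H) : ℝ≥0∞ :=
  ∫⁻ x, (‖pinner f (F x)‖₊ : ℝ≥0∞) ^ 2 ∂μ

/-- `F` is weakly measurable: `x ↦ ⟨f, F x⟩` is μ-measurable for every `f`. -/
def WeaklyMeasurable [MeasurableSpace X] [NormedAddCommGroup H] [InnerProductSpace ℂ H]
    (μ : Measure X) (F : X → H) : Prop :=
  ∀ f : H, AEMeasurable (fun x => pinner f (F x)) μ

/-- `F` is a Bessel mapping for `H` w.r.t. `(X, μ)` with Bessel bound `B < ∞`. -/
def IsBesselMapping [MeasurableSpace X] [NormedAddCommGroup H] [InnerProductSpace ℂ H]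
    (μ : Measure X) (F : X → H) (B : ℝ≥0∞) : Prop :=
  B < ⊤ ∧ WeaklyMeasurable μ F ∧
    ∀ f : H, frameInt μ F f ≤ B * (‖f‖₊ : ℝ≥0∞) ^ 2

/-- `F` is a continuous frame for `H` w.r.t. `(X, μ)` with frame bounds `0 < A ≤ B < ∞`:
`A ‖f‖² ≤ ∫_X |⟨f, F x⟩|² dμ(x) ≤ B ‖f‖²` for all `f ∈ H`. -/
def IsContinuousFrame [MeasurableSpace X] [NormedAddCommGroup H] [InnerProductSpace ℂ H]
    (μ : Measure X) (F : X → H) (A B : ℝ≥0∞) : Prop :=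
  0 < A ∧ A ≤ B ∧ B < ⊤ ∧ WeaklyMeasurable μ F ∧
    ∀ f : H, A * (‖f‖₊ : ℝ≥0∞) ^ 2 ≤ frameInt μ F f ∧
      frameInt μ F f ≤ B * (‖f‖₊ : ℝ≥0∞) ^ 2

/-- A realization of the Hilbert tensor product `H = H₁ ⊗ H₂`: a bilinear map
`tmul` whose simple tensors satisfy `⟪a⊗b, c⊗d⟫ = ⟪a,c⟫⟪b,d⟫` and span a dense subspace. -/
structure HilbertTensorProduct (H₁ H₂ H : Type*)
    [NormedAddCommGroup H₁] [InnerProductSpace ℂ H₁]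
    [NormedAddCommGroup H₂] [InnerProductSpace ℂ H₂]
    [NormedAddCommGroup H] [InnerProductSpace ℂ H] where
  tmul : H₁ →ₗ[ℂ] H₂ →ₗ[ℂ] H
  inner_tmul : ∀ (a c : H₁) (b d : H₂),
    (inner ℂ (tmul a b) (tmul c d) : ℂ) = (inner ℂ a c : ℂ) * (inner ℂ b d : ℂ)
  dense_span : Dense (↑(Submodule.span ℂ {z : H | ∃ a b, z = tmul a b}) : Set H)

theorem IsContinuousFrame.isBesselMapping [MeasurableSpace X] [NormedAddCommGroup H]
    [InnerProductSpace ℂ H] {μ : Measure X} {F : X → H} {A B : ℝ≥0∞}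
    (h : IsContinuousFrame μ F A B) : IsBesselMapping μ F B :=
  ⟨h.2.2.1, h.2.2.2.1, fun f => (h.2.2.2.2 f).2⟩

theorem _root_.Orthonormal.countable {𝕜 E ι : Type*} [RCLike 𝕜] [NormedAddCommGroup E]
    [InnerProductSpace 𝕜 E] [TopologicalSpace.SeparableSpace E] {v : ι → E}
    (hv : Orthonormal 𝕜 v) : Countable ι := by
  refine Pairwise.countable_of_isOpen_disjoint (s := fun i => Metric.ball (v i) (1 / 2))
    (fun i j hij => Metric.ball_disjoint_ball ?_) (fun _ => Metric.isOpen_ball)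
    (fun i => ⟨v i, Metric.mem_ball_self (by norm_num)⟩)
  have hdist : dist (v i) (v j) ^ 2 = 2 := by
    rw [dist_eq_norm, @norm_sub_sq 𝕜, hv.1 i, hv.1 j, hv.2 hij]
    norm_num
  nlinarith [dist_nonneg (x := v i) (y := v j)]

theorem _root_.HilbertBasis.tsum_nnnorm_inner_sq {𝕜 E ι : Type*} [RCLike 𝕜]
    [NormedAddCommGroup E] [InnerProductSpace 𝕜 E] (b : HilbertBasis ι 𝕜 E) (x : E) :
    ∑' i, (‖(inner 𝕜 (b i) x : 𝕜)‖₊ : ℝ≥0∞) ^ 2 = (‖x‖₊ : ℝ≥0∞) ^ 2 := by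
  have h := lp.hasSum_norm (p := 2) (by norm_num) (b.repr x)
  simp only [b.repr_apply_apply, b.repr.norm_map, ENNReal.toReal_ofNat, Real.rpow_two] at h
  have h' : HasSum (fun i => ‖(inner 𝕜 (b i) x : 𝕜)‖₊ ^ 2) (‖x‖₊ ^ 2) := by
    rw [← NNReal.hasSum_coe]; simpa using h
  exact_mod_cast ENNReal.tsum_coe_eq h'

theorem _root_.HilbertBasis.map_mem_of_forall {𝕜 E F ι : Type*} [RCLike 𝕜]
    [NormedAddCommGroup E] [InnerProductSpace 𝕜 E] [NormedAddCommGroup F] [NormedSpace 𝕜 F]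
    (b : HilbertBasis ι 𝕜 E) (T : E →L[𝕜] F) {M : Submodule 𝕜 F} (hM : IsClosed (M : Set F))
    (hT : ∀ i, T (b i) ∈ M) (x : E) : T x ∈ M := by
  have h : (Submodule.span 𝕜 (Set.range b)).topologicalClosure ≤ M.comap T.toLinearMap :=
    Submodule.topologicalClosure_minimal _ (Submodule.span_le.2 (Set.range_subset_iff.2 hT))
      (hM.preimage T.continuous)
  rw [b.dense_span] at h
  exact h Submodule.mem_top

namespace HilbertTensorProduct

variable {H₁ H₂ H : Type*}
  [NormedAddCommGroup H₁] [InnerProductSpace ℂ H₁]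
  [NormedAddCommGroup H₂] [InnerProductSpace ℂ H₂]
  [NormedAddCommGroup H] [InnerProductSpace ℂ H]
  (tp : HilbertTensorProduct H₁ H₂ H)

theorem norm_tmul (a : H₁) (b : H₂) : ‖tp.tmul a b‖ = ‖a‖ * ‖b‖ := by
  have h := congrArg Complex.re (tp.inner_tmul a a b b)
  simp only [inner_self_eq_norm_sq_to_K] at h
  norm_cast at h
  rw [← mul_pow] at h
  exact (pow_left_inj₀ (norm_nonneg _) (by positivity) two_ne_zero).1 h

def tmulLeft (a : H₁) : H₂ →L[ℂ] H :=
  (tp.tmul a).mkContinuous ‖a‖ fun b => (tp.norm_tmul a b).le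

def tmulRight (b : H₂) : H₁ →L[ℂ] H :=
  (tp.tmul.flip b).mkContinuous ‖b‖ fun a => by
    simp [tp.norm_tmul, mul_comm]

theorem orthonormal_tmul {ι₁ ι₂ : Type*} {u : ι₁ → H₁} {e : ι₂ → H₂}
    (hu : Orthonormal ℂ u) (he : Orthonormal ℂ e) :
    Orthonormal ℂ (fun p : ι₁ × ι₂ => tp.tmul (u p.1) (e p.2)) := by
  classical
  rw [orthonormal_iff_ite] at hu he ⊢
  intro p q
  rw [tp.inner_tmul, hu, he]
  by_cases h₁ : p.1 = q.1 <;> by_cases h₂ : p.2 = q.2 <;> simp [Prod.ext_iff, h₁, h₂]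

theorem dense_span_tmul {ι₁ ι₂ : Type*} (u : HilbertBasis ι₁ ℂ H₁) (e : HilbertBasis ι₂ ℂ H₂) :
    ⊤ ≤ (Submodule.span ℂ
      (Set.range fun p : ι₁ × ι₂ => tp.tmul (u p.1) (e p.2))).topologicalClosure := by
  set M := (Submodule.span ℂ
    (Set.range fun p : ι₁ × ι₂ => tp.tmul (u p.1) (e p.2))).topologicalClosure
  have hM : IsClosed (M : Set H) := Submodule.isClosed_topologicalClosure _
  have hbasis : ∀ i j, tp.tmul (u i) (e j) ∈ M := fun i j =>
    Submodule.le_topologicalClosure _ (Submodule.subset_span ⟨(i, j), rfl⟩)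
  have htmul : ∀ a b, tp.tmul a b ∈ M := fun a b =>
    u.map_mem_of_forall (tp.tmulRight b) hM (fun i => e.map_mem_of_forall (tp.tmulLeft (u i)) hM
      (hbasis i) b) a
  rw [← Submodule.dense_iff_topologicalClosure_eq_top.1 tp.dense_span]
  exact Submodule.topologicalClosure_minimal _
    (Submodule.span_le.2 fun z ⟨a, b, hz⟩ => hz ▸ htmul a b) hM

variable [CompleteSpace H]

def hilbertBasis {ι₁ ι₂ : Type*} (u : HilbertBasis ι₁ ℂ H₁) (e : HilbertBasis ι₂ ℂ H₂) :
    HilbertBasis (ι₁ × ι₂) ℂ H :=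
  .mk (tp.orthonormal_tmul u.orthonormal e.orthonormal) (tp.dense_span_tmul u e)

@[simp] theorem hilbertBasis_apply {ι₁ ι₂ : Type*} (u : HilbertBasis ι₁ ℂ H₁)
    (e : HilbertBasis ι₂ ℂ H₂) (p : ι₁ × ι₂) :
    tp.hilbertBasis u e p = tp.tmul (u p.1) (e p.2) := by
  simp [hilbertBasis]

def contractLeft [CompleteSpace H₂] (f : H) (a : H₁) : H₂ := (tp.tmulLeft a).adjoint f

def contractRight [CompleteSpace H₁] (f : H) (b : H₂) : H₁ := (tp.tmulRight b).adjoint f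

theorem pinner_contractLeft [CompleteSpace H₂] (f : H) (a : H₁) (b : H₂) :
    pinner (tp.contractLeft f a) b = pinner f (tp.tmul a b) :=
  ContinuousLinearMap.adjoint_inner_right _ _ _

theorem pinner_contractRight [CompleteSpace H₁] (f : H) (a : H₁) (b : H₂) :
    pinner (tp.contractRight f b) a = pinner f (tp.tmul a b) :=
  ContinuousLinearMap.adjoint_inner_right _ _ _

theorem inner_contractLeft [CompleteSpace H₂] (f : H) (a : H₁) (b : H₂) :
    inner ℂ b (tp.contractLeft f a) = pinner f (tp.tmul a b) :=
  tp.pinner_contractLeft f a b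

theorem hasSum_pinner_tmul [CompleteSpace H₂] {ι : Type*}
    (e : HilbertBasis ι ℂ H₂) (f : H) (a : H₁) (b : H₂) :
    HasSum (fun j => pinner (e j) b * pinner f (tp.tmul a (e j))) (pinner f (tp.tmul a b)) := by
  have h := e.hasSum_inner_mul_inner b (tp.contractLeft f a)
  simp only [tp.inner_contractLeft] at h
  exact h

theorem tsum_nnnorm_contractRight_sq [CompleteSpace H₁] {ι : Type*}
    (e : HilbertBasis ι ℂ H₂) (f : H) :
    ∑' j, (‖tp.contractRight f (e j)‖₊ : ℝ≥0∞) ^ 2 = (‖f‖₊ : ℝ≥0∞) ^ 2 := by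
  obtain ⟨w, u, -⟩ := exists_hilbertBasis ℂ H₁
  have h : ∀ i j, (inner ℂ (u i) (tp.contractRight f (e j)) : ℂ)
      = inner ℂ (tp.hilbertBasis u e (i, j)) f := by
    intro i j
    rw [hilbertBasis_apply]
    exact tp.pinner_contractRight f (u i) (e j)
  calc ∑' j, (‖tp.contractRight f (e j)‖₊ : ℝ≥0∞) ^ 2
      = ∑' j, ∑' i, (‖(inner ℂ (u i) (tp.contractRight f (e j)) : ℂ)‖₊ : ℝ≥0∞) ^ 2 := by
        simp_rw [u.tsum_nnnorm_inner_sq]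
    _ = ∑' p, (‖(inner ℂ (tp.hilbertBasis u e p) f : ℂ)‖₊ : ℝ≥0∞) ^ 2 := by
        rw [ENNReal.tsum_comm, ← ENNReal.tsum_prod]
        simp_rw [h]
    _ = (‖f‖₊ : ℝ≥0∞) ^ 2 := (tp.hilbertBasis u e).tsum_nnnorm_inner_sq f

section Frames

variable {X₁ X₂ : Type*} [MeasurableSpace X₁] [MeasurableSpace X₂]
  {μ₁ : Measure X₁} {μ₂ : Measure X₂} {F₁ : X₁ → H₁} {F₂ : X₂ → H₂}

def tensor (F₁ : X₁ → H₁) (F₂ : X₂ → H₂) : X₁ × X₂ → H := fun x => tp.tmul (F₁ x.1) (F₂ x.2)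

theorem weaklyMeasurable_tensor [CompleteSpace H₁] [CompleteSpace H₂]
    [TopologicalSpace.SeparableSpace H₂]
    (h₁ : WeaklyMeasurable μ₁ F₁) (h₂ : WeaklyMeasurable μ₂ F₂) :
    WeaklyMeasurable (μ₁.prod μ₂) (tp.tensor F₁ F₂) := by
  intro f
  obtain ⟨w, e, -⟩ := exists_hilbertBasis ℂ H₂
  have := e.orthonormal.countable
  refine aemeasurable_of_tendsto_metrizable_ae Filter.atTop
    (fun s => Finset.aemeasurable_fun_sum s fun j _ => ?_)
    (ae_of_all _ fun x => tp.hasSum_pinner_tmul e f (F₁ x.1) (F₂ x.2))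
  refine ((h₂ _).comp_quasiMeasurePreserving Measure.quasiMeasurePreserving_snd).mul ?_
  simp only [← tp.pinner_contractRight]
  exact (h₁ _).comp_quasiMeasurePreserving Measure.quasiMeasurePreserving_fst

theorem frameInt_tensor [CompleteSpace H₂] [SFinite μ₂]
    (hm : WeaklyMeasurable (μ₁.prod μ₂) (tp.tensor F₁ F₂)) (f : H) :
    frameInt (μ₁.prod μ₂) (tp.tensor F₁ F₂) f
      = ∫⁻ x₁, frameInt μ₂ F₂ (tp.contractLeft f (F₁ x₁)) ∂μ₁ := by
  rw [frameInt, lintegral_prod (fun x => (‖pinner f (tp.tensor F₁ F₂ x)‖₊ : ℝ≥0∞) ^ 2)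
    ((hm f).enorm.pow_const 2)]
  simp only [frameInt, tensor, pinner_contractLeft]

theorem lintegral_nnnorm_contractLeft_sq [CompleteSpace H₁] [CompleteSpace H₂] {ι : Type*}
    [Countable ι] (e : HilbertBasis ι ℂ H₂) (h₁ : WeaklyMeasurable μ₁ F₁) (f : H) :
    ∫⁻ x₁, (‖tp.contractLeft f (F₁ x₁)‖₊ : ℝ≥0∞) ^ 2 ∂μ₁
      = ∑' j, frameInt μ₁ F₁ (tp.contractRight f (e j)) := by
  simp_rw [← e.tsum_nnnorm_inner_sq, inner_contractLeft, ← pinner_contractRight]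
  exact lintegral_tsum fun j => (h₁ _).enorm.pow_const 2

theorem isBesselMapping_tensor [CompleteSpace H₁] [CompleteSpace H₂]
    [TopologicalSpace.SeparableSpace H₂] [SFinite μ₂] {B₁ B₂ : ℝ≥0∞}
    (h₁ : IsBesselMapping μ₁ F₁ B₁) (h₂ : IsBesselMapping μ₂ F₂ B₂) :
    IsBesselMapping (μ₁.prod μ₂) (tp.tensor F₁ F₂) (B₁ * B₂) := by
  obtain ⟨hB₁, hm₁, hb₁⟩ := h₁
  obtain ⟨hB₂, hm₂, hb₂⟩ := h₂
  have hm := tp.weaklyMeasurable_tensor hm₁ hm₂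
  refine ⟨ENNReal.mul_lt_top hB₁ hB₂, hm, fun f => ?_⟩
  obtain ⟨w, e, -⟩ := exists_hilbertBasis ℂ H₂
  have := e.orthonormal.countable
  calc frameInt (μ₁.prod μ₂) (tp.tensor F₁ F₂) f
      = ∫⁻ x₁, frameInt μ₂ F₂ (tp.contractLeft f (F₁ x₁)) ∂μ₁ := tp.frameInt_tensor hm f
    _ ≤ ∫⁻ x₁, B₂ * (‖tp.contractLeft f (F₁ x₁)‖₊ : ℝ≥0∞) ^ 2 ∂μ₁ :=
        lintegral_mono fun x₁ => hb₂ _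
    _ = B₂ * ∑' j, frameInt μ₁ F₁ (tp.contractRight f (e j)) := by
        rw [lintegral_const_mul' _ _ hB₂.ne, tp.lintegral_nnnorm_contractLeft_sq e hm₁]
    _ ≤ B₂ * ∑' j, B₁ * (‖tp.contractRight f (e j)‖₊ : ℝ≥0∞) ^ 2 := by
        gcongr with j
        exact hb₁ _
    _ = B₁ * B₂ * (‖f‖₊ : ℝ≥0∞) ^ 2 := by
        rw [ENNReal.tsum_mul_left, tp.tsum_nnnorm_contractRight_sq]
        ring

theorem mul_le_frameInt_tensor [CompleteSpace H₁] [CompleteSpace H₂]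
    [TopologicalSpace.SeparableSpace H₂] [SFinite μ₂] {A₁ A₂ : ℝ≥0∞}
    (hm₁ : WeaklyMeasurable μ₁ F₁) (hm₂ : WeaklyMeasurable μ₂ F₂)
    (hA₁ : ∀ g, A₁ * (‖g‖₊ : ℝ≥0∞) ^ 2 ≤ frameInt μ₁ F₁ g)
    (hA₂ : ∀ g, A₂ * (‖g‖₊ : ℝ≥0∞) ^ 2 ≤ frameInt μ₂ F₂ g) (f : H) :
    A₁ * A₂ * (‖f‖₊ : ℝ≥0∞) ^ 2 ≤ frameInt (μ₁.prod μ₂) (tp.tensor F₁ F₂) f := by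
  obtain ⟨w, e, -⟩ := exists_hilbertBasis ℂ H₂
  have := e.orthonormal.countable
  calc A₁ * A₂ * (‖f‖₊ : ℝ≥0∞) ^ 2
      = A₂ * ∑' j, A₁ * (‖tp.contractRight f (e j)‖₊ : ℝ≥0∞) ^ 2 := by
        rw [ENNReal.tsum_mul_left, tp.tsum_nnnorm_contractRight_sq]
        ring
    _ ≤ A₂ * ∑' j, frameInt μ₁ F₁ (tp.contractRight f (e j)) := by
        gcongr with j
        exact hA₁ _
    _ = A₂ * ∫⁻ x₁, (‖tp.contractLeft f (F₁ x₁)‖₊ : ℝ≥0∞) ^ 2 ∂μ₁ := by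
        rw [tp.lintegral_nnnorm_contractLeft_sq e hm₁]
    _ ≤ ∫⁻ x₁, A₂ * (‖tp.contractLeft f (F₁ x₁)‖₊ : ℝ≥0∞) ^ 2 ∂μ₁ :=
        lintegral_const_mul_le _ _
    _ ≤ ∫⁻ x₁, frameInt μ₂ F₂ (tp.contractLeft f (F₁ x₁)) ∂μ₁ :=
        lintegral_mono fun x₁ => hA₂ _
    _ = frameInt (μ₁.prod μ₂) (tp.tensor F₁ F₂) f :=
        (tp.frameInt_tensor (tp.weaklyMeasurable_tensor hm₁ hm₂) f).symm

end Frames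

end HilbertTensorProduct

theorem tensor_of_frames_isFrame
    {X₁ X₂ : Type*} [MeasurableSpace X₁] [MeasurableSpace X₂]
    {H₁ H₂ H : Type*}
    [NormedAddCommGroup H₁] [InnerProductSpace ℂ H₁] [CompleteSpace H₁]
    [NormedAddCommGroup H₂] [InnerProductSpace ℂ H₂] [CompleteSpace H₂]
      [TopologicalSpace.SeparableSpace H₂]
    [NormedAddCommGroup H] [InnerProductSpace ℂ H] [CompleteSpace H]
    (μ₁ : Measure X₁) (μ₂ : Measure X₂) [SigmaFinite μ₂]
    (tp : HilbertTensorProduct H₁ H₂ H)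
    (F₁ : X₁ → H₁) (F₂ : X₂ → H₂) (A₁ B₁ A₂ B₂ : ℝ≥0∞)
    (hF₁ : IsContinuousFrame μ₁ F₁ A₁ B₁)
    (hF₂ : IsContinuousFrame μ₂ F₂ A₂ B₂) :
    IsContinuousFrame (μ₁.prod μ₂)
      (fun x : X₁ × X₂ => tp.tmul (F₁ x.1) (F₂ x.2)) (A₁ * A₂) (B₁ * B₂) := by
  have hB := tp.isBesselMapping_tensor hF₁.isBesselMapping hF₂.isBesselMapping
  obtain ⟨hA₁, hAB₁, -, hm₁, hb₁⟩ := hF₁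
  obtain ⟨hA₂, hAB₂, -, hm₂, hb₂⟩ := hF₂
  exact ⟨ENNReal.mul_pos hA₁.ne' hA₂.ne', mul_le_mul' hAB₁ hAB₂, hB.1, hB.2.1, fun f =>
    ⟨tp.mul_le_frameInt_tensor hm₁ hm₂ (fun g => (hb₁ g).1) (fun g => (hb₂ g).1) f, hB.2.2 f⟩⟩

end ContFrame
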